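/- arXiv:2510.21335 — 5 statements merged into one kernel-verified Lean document; each statement's English description precedes it below -/
import Mathlib

section
/- Let Y|A be forecast-invariant, U take values in [0,1], S' ∈ [0,1] be a strictly proper scoring rule, and suppose the expected utilities of distinct actions under the true kernel differ by more than Δ > 0. Then the combined score S(F, a, y) := U(a_F, y) + Δ·S'(F(·|a_F), y) satisfies: (i) any forecast maximizing the expected combined score induces the optimal action a*, and (ii) any maximizing forecast has F(·|a*) equal to the true distribution P(Y|A=a*); i.e., S is incentive-compatible and observationally strictly proper. -/
/-- `q` is a probability vector on the finite type `Y`. -/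
def IsProbVec {Y : Type*} [Fintype Y] (q : Y → ℝ) : Prop :=
  (∀ y, 0 ≤ q y) ∧ ∑ y, q y = 1

/-- Utility score plus a `Δ`-scaled strictly proper score: under forecast-invariance,
`U ∈ [0,1]`, `S' ∈ [0,1]` strictly proper, and a utility gap `> Δ` between distinct actions,
any maximizer `F` of the expected combined score induces the optimal action `aF p` and has
`F (aF p) = p (aF p)`: incentive compatibility and observational strict properness. -/
theorem stmt_7 {A Y : Type*} [Fintype Y]
    (p : A → Y → ℝ) (hp : ∀ a, IsProbVec (p a))
    (U : A → Y → ℝ) (hU : ∀ a y, U a y ∈ Set.Icc (0 : ℝ) 1)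
    (S' : (Y → ℝ) → Y → ℝ) (hS'range : ∀ q y, S' q y ∈ Set.Icc (0 : ℝ) 1)
    (hS'proper : ∀ q r : Y → ℝ, IsProbVec q → IsProbVec r →
      (∑ y, r y * S' q y) ≤ ∑ y, r y * S' r y)
    (hS'strict : ∀ q r : Y → ℝ, IsProbVec q → IsProbVec r →
      (∑ y, r y * S' q y) = (∑ y, r y * S' r y) → q = r)
    (aF : (A → Y → ℝ) → A)
    (hBayes : ∀ F : A → Y → ℝ, ∀ a : A,
      (∑ y, F a y * U a y) ≤ ∑ y, F (aF F) y * U (aF F) y)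
    (Δ : ℝ) (hΔ : 0 < Δ)
    (hgap : ∀ a a' : A, a ≠ a' →
      Δ < |(∑ y, p a y * U a y) - ∑ y, p a' y * U a' y|) :
    ∀ F : A → Y → ℝ, (∀ a, IsProbVec (F a)) →
      (∀ G : A → Y → ℝ, (∀ a, IsProbVec (G a)) →
        (∑ y, p (aF G) y * (U (aF G) y + Δ * S' (G (aF G)) y)) ≤
          ∑ y, p (aF F) y * (U (aF F) y + Δ * S' (F (aF F)) y)) →
      aF F = aF p ∧ F (aF p) = p (aF p) := by
  intro F hF hmax
  have hkey := hmax p hp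
  have expand : ∀ (a : A) (q : Y → ℝ),
      (∑ y, p a y * (U a y + Δ * S' q y))
        = (∑ y, p a y * U a y) + Δ * ∑ y, p a y * S' q y := by
    intro a q
    rw [Finset.mul_sum, ← Finset.sum_add_distrib]
    exact Finset.sum_congr rfl fun y _ => by ring
  rw [expand, expand] at hkey
  have hub : ∀ (a : A) (q : Y → ℝ), (∑ y, p a y * S' q y) ≤ 1 := by
    intro a q
    calc (∑ y, p a y * S' q y) ≤ ∑ y, p a y * 1 :=
          Finset.sum_le_sum fun y _ =>
            mul_le_mul_of_nonneg_left (hS'range q y).2 ((hp a).1 y)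
      _ = 1 := by simp [(hp a).2]
  have hlb : ∀ (a : A) (q : Y → ℝ), 0 ≤ ∑ y, p a y * S' q y := by
    intro a q
    exact Finset.sum_nonneg fun y _ => mul_nonneg ((hp a).1 y) (hS'range q y).1
  have hB : ∑ y, p (aF F) y * U (aF F) y ≤ ∑ y, p (aF p) y * U (aF p) y :=
    hBayes p (aF F)
  have heq : aF F = aF p := by
    by_contra hne
    have hg := hgap (aF F) (aF p) hne
    have h1 : ∑ y, p (aF p) y * U (aF p) y ≤ (∑ y, p (aF F) y * U (aF F) y) + Δ := by
      have := hlb (aF p) (p (aF p))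
      have h2 := hub (aF F) (F (aF F))
      nlinarith
    have habs : |(∑ y, p (aF F) y * U (aF F) y) - ∑ y, p (aF p) y * U (aF p) y| ≤ Δ :=
      abs_le.mpr ⟨by linarith, by linarith⟩
    linarith
  rw [heq] at hkey
  refine ⟨heq, ?_⟩
  have hprop := hS'proper (F (aF p)) (p (aF p)) (by rw [← heq]; exact hF (aF F)) (hp (aF p))
  have hle : (∑ y, p (aF p) y * S' (p (aF p)) y) ≤ ∑ y, p (aF p) y * S' (F (aF p)) y := by
    nlinarith
  exact hS'strict (F (aF p)) (p (aF p)) (by rw [← heq]; exact hF (aF F)) (hp (aF p))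
    (le_antisymm hprop hle)
end

section
/- If S is a proper scoring rule and for the model M there exists an observationally correct conditional forecast, then the performative divergence D_pc(F, M) = ∫ [S(P_M(Y|A=a, do(F)), y) - S(F(·|a), y)] P_M(da, dy | do(F)) is nonnegative for all conditional forecasts F, and equals zero at any observationally correct forecast. If S is strictly proper, then D_pc(F, M) = 0 implies F is observationally correct. -/
/-- Properness of the performative divergence: with a proper classical expected score
`Sb Q P` (of forecast `Q` under truth `P`), model given by the induced action probabilities
`PA F` and conditionals `PY F`, and assuming an observationally correct forecast exists,
the performative divergence `∑ a, PA F a * (Sb (PY F a) (PY F a) - Sb (F a) (PY F a))` is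
nonnegative, vanishes at observationally correct forecasts, and, if `Sb` is strictly proper,
vanishes only at observationally correct forecasts. -/
theorem stmt_8 {A D : Type*} [Fintype A]
    (Sb : D → D → ℝ)
    (hproper : ∀ Q P : D, Sb Q P ≤ Sb P P)
    (PA : (A → D) → A → ℝ)
    (hPA0 : ∀ F a, 0 ≤ PA F a) (hPA1 : ∀ F, ∑ a, PA F a = 1)
    (PY : (A → D) → A → D)
    (hex : ∃ F : A → D, ∀ a, 0 < PA F a → F a = PY F a) :
    (∀ F : A → D,
      0 ≤ ∑ a, PA F a * (Sb (PY F a) (PY F a) - Sb (F a) (PY F a))) ∧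
    (∀ F : A → D, (∀ a, 0 < PA F a → F a = PY F a) →
      (∑ a, PA F a * (Sb (PY F a) (PY F a) - Sb (F a) (PY F a))) = 0) ∧
    ((∀ Q P : D, Sb Q P = Sb P P → Q = P) →
      ∀ F : A → D,
        (∑ a, PA F a * (Sb (PY F a) (PY F a) - Sb (F a) (PY F a))) = 0 →
        ∀ a, 0 < PA F a → F a = PY F a) := by
  have key : ∀ F : A → D, ∀ a : A,
      0 ≤ PA F a * (Sb (PY F a) (PY F a) - Sb (F a) (PY F a)) := fun F a =>
    mul_nonneg (hPA0 F a) (sub_nonneg.mpr (hproper _ _))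
  refine ⟨fun F => Finset.sum_nonneg fun a _ => key F a, ?_, ?_⟩
  · intro F hF
    refine Finset.sum_eq_zero fun a _ => ?_
    rcases (hPA0 F a).lt_or_eq with h | h
    · rw [hF a h]; ring
    · rw [← h]; ring
  · intro hstrict F hsum a ha
    have h0 : PA F a * (Sb (PY F a) (PY F a) - Sb (F a) (PY F a)) = 0 := by
      have := (Finset.sum_eq_zero_iff_of_nonneg (fun a _ => key F a)).mp hsum a (Finset.mem_univ a)
      exact this
    have h1 : Sb (PY F a) (PY F a) - Sb (F a) (PY F a) = 0 := by
      rcases mul_eq_zero.mp h0 with h | h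
      · exact absurd h ha.ne'
      · exact h
    exact hstrict _ _ (by linarith)
end

section
/- Suppose P_M(A | do(F)) has full support on the finite set A for every forecast F, and Y|A is forecast-invariant with true kernel P(Y|A). If S is a strictly proper scoring rule, then the inverse-probability-weighted expected score S̄_IPW(F, M) = ∑_{a∈A} ∫ S(F(·|a), y) P(dy|A=a) is uniquely maximized over conditional forecasts F at the correct forecast F*(·|a) = P(Y|A=a). -/
/-- IPW scoring is strictly proper: if the action mechanism has full support for every
forecast and `Y|A` is forecast-invariant with true kernel `P`, then for a strictly proper
classical expected score `Sb`, the IPW expected score `∑ a, Sb (F a) (P a)` is uniquely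
maximized at the correct forecast `F = P`. -/
theorem stmt_11 {A D : Type*} [Fintype A]
    (Sb : D → D → ℝ)
    (hproper : ∀ Q P : D, Sb Q P ≤ Sb P P)
    (hstrict : ∀ Q P : D, Sb Q P = Sb P P → Q = P)
    (PA : (A → D) → A → ℝ) (hfull : ∀ F a, 0 < PA F a)
    (P : A → D) :
    (∀ F : A → D, (∑ a, Sb (F a) (P a)) ≤ ∑ a, Sb (P a) (P a)) ∧
    (∀ F : A → D, (∑ a, Sb (F a) (P a)) = (∑ a, Sb (P a) (P a)) → F = P) := by
  constructor
  · intro F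
    exact Finset.sum_le_sum fun a _ => hproper (F a) (P a)
  · intro F hF
    funext a
    have h := (Finset.sum_eq_sum_iff_of_le (fun a _ => hproper (F a) (P a))).mp hF a (Finset.mem_univ a)
    exact hstrict _ _ h
end

section
/- Impossibility of proper scoring under performativity: let S be a scoring rule on distributions over Y such that there exist P0, P1 and a forecast F̃ ≠ P1 with S̄(P0,P0) < S̄(F̃,P1) < S̄(P1,P1). Then there exists a model M with forecast-invariant Y|A and deterministic action mechanism such that the expected score of some observationally incorrect conditional forecast strictly exceeds the expected score of every observationally correct forecast; hence S is not observationally proper on the class of such models. -/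
/-- Deterministic action mechanism: `A = 1` iff the reported forecast for `A = 1` is `F̃`. -/
def act12 {D : Type*} [DecidableEq D] (Ftilde : D) (F : Bool → D) : Bool :=
  if F true = Ftilde then true else false

/-- Forecast-invariant true conditionals: `P(Y|A=1) = P1`, `P(Y|A=0) = P0`. -/
def kern12 {D : Type*} (P0 P1 : D) : Bool → D := fun b => if b then P1 else P0

/-- Impossibility of proper scoring under performativity (deterministic mechanism):
if `S̄(P0,P0) < S̄(F̃,P1) < S̄(P1,P1)` with `F̃ ≠ P1`, then in the model with forecast-invariant
conditionals `kern12 P0 P1` and deterministic mechanism `act12 F̃`, some observationally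
incorrect forecast attains strictly higher expected score than every observationally correct
forecast. -/
theorem stmt_12 {D : Type*} [DecidableEq D] (Sb : D → D → ℝ)
    (P0 P1 Ftilde : D) (hne : Ftilde ≠ P1)
    (h1 : Sb P0 P0 < Sb Ftilde P1) (h2 : Sb Ftilde P1 < Sb P1 P1) :
    ∃ Fbad : Bool → D,
      Fbad (act12 Ftilde Fbad) ≠ kern12 P0 P1 (act12 Ftilde Fbad) ∧
      ∀ F : Bool → D,
        F (act12 Ftilde F) = kern12 P0 P1 (act12 Ftilde F) →
        Sb (F (act12 Ftilde F)) (kern12 P0 P1 (act12 Ftilde F)) <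
          Sb (Fbad (act12 Ftilde Fbad)) (kern12 P0 P1 (act12 Ftilde Fbad)) := by
  refine ⟨fun _ => Ftilde, ?_, ?_⟩
  · simp [act12, kern12, hne]
  · intro F hF
    by_cases h : F true = Ftilde
    · simp [act12, kern12, h] at hF
      exact absurd (h ▸ hF) hne
    · simp [act12, kern12, h] at hF ⊢
      rw [hF]; exact h1
end

section
/- Impossibility under full support: under the same scoring-rule assumption S̄(P0,P0) < S̄(F̃,P1) < S̄(P1,P1) with F̃ ≠ P1, for any distribution Q on A = {0,1} with full support and Q(A=1) < (S̄(F̃,P1) - S̄(P0,P0))/(S̄(P1,P1) - S̄(F̃,P1)), the mechanism P(A|do(F)) = (1/2)Q + (1/2)δ_1 if F(·|A=1)=F̃ and (1/2)Q + (1/2)δ_0 otherwise has full support for every forecast, Y|A is forecast-invariant, yet the observationally incorrect forecast (F̃ at a=1, P0 at a=0) attains strictly higher expected score than the correct forecast (P1 at a=1, P0 at a=0). -/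
/-- The mixture mechanism `P(A|do(F)) = (1/2)Q + (1/2)δ_{a(F)}` where `a(F) = 1` iff
the reported forecast for `A = 1` equals `F̃`. -/
noncomputable def mech13 {D : Type*} [DecidableEq D] (Q : Bool → ℝ) (Ftilde : D)
    (F : Bool → D) (a : Bool) : ℝ :=
  (1/2) * Q a + (1/2) * (if a = (if F true = Ftilde then true else false) then 1 else 0)

/-- Expected score of conditional forecast `F`:
`∑_a P(A=a|do(F)) · S̄(F(·|a), P(Y|A=a))` with `P(Y|A=1) = P1`, `P(Y|A=0) = P0`. -/
noncomputable def es13 {D : Type*} [DecidableEq D] (Q : Bool → ℝ) (Ftilde : D)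
    (Sb : D → D → ℝ) (P0 P1 : D) (F : Bool → D) : ℝ :=
  mech13 Q Ftilde F true * Sb (F true) P1 + mech13 Q Ftilde F false * Sb (F false) P0

/-- Impossibility under full support: if `S̄(P0,P0) < S̄(F̃,P1) < S̄(P1,P1)`, `F̃ ≠ P1`,
and `Q` has full support with `Q(1) < (S̄(F̃,P1) - S̄(P0,P0))/(S̄(P1,P1) - S̄(F̃,P1))`, then
the mixture mechanism has full support for every forecast, yet the observationally incorrect
forecast `(F̃, P0)` attains strictly higher expected score than the correct forecast `(P1, P0)`. -/
theorem stmt_13 {D : Type*} [DecidableEq D] (Sb : D → D → ℝ)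
    (P0 P1 Ftilde : D) (hne : Ftilde ≠ P1)
    (h1 : Sb P0 P0 < Sb Ftilde P1) (h2 : Sb Ftilde P1 < Sb P1 P1)
    (Q : Bool → ℝ) (hQpos : ∀ a, 0 < Q a) (hQsum : Q true + Q false = 1)
    (hQlt : Q true < (Sb Ftilde P1 - Sb P0 P0) / (Sb P1 P1 - Sb Ftilde P1)) :
    (∀ (F : Bool → D) (a : Bool), 0 < mech13 Q Ftilde F a) ∧
    es13 Q Ftilde Sb P0 P1 (fun b => if b then P1 else P0) <
      es13 Q Ftilde Sb P0 P1 (fun b => if b then Ftilde else P0) := by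
  constructor
  · intro F a
    unfold mech13
    have := hQpos a
    split <;> split <;> nlinarith
  · have hden : 0 < Sb P1 P1 - Sb Ftilde P1 := by linarith
    have key : Q true * (Sb P1 P1 - Sb Ftilde P1) < Sb Ftilde P1 - Sb P0 P0 := by
      have := (lt_div_iff₀ hden).mp hQlt
      linarith
    unfold es13 mech13
    simp only [if_pos rfl, if_neg hne]
    simp only [if_true, if_false]
    norm_num
    simp only [if_neg (Ne.symm hne)]
    nlinarith [hQpos true, hQpos false]
end
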